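/- arXiv:1509.00362 — 6 statements merged into one kernel-verified Lean document; each statement's English description precedes it below -/
import Mathlib

section
/- If g_j = C(n − d − 2 + j, j) for 0 ≤ j ≤ l satisfies Σ_{i=0}^{l} C(n−d−2+i, i) · C(d+1−i, d−l) + g_{l+1} = C(n, l+1), then g_{l+1} = C(n−d−1+l, l+1). -/
/-! With `a = n - d - 2` and `b = d - l`, the sum in the hypothesis is the convolution
`∑_{i ≤ l + 1} C(a + i, a) C(b + l + 1 - i, b) = C(n, l + 1)` without its last term,
and that last term is `C(n - d - 1 + l, l + 1)`. -/

open Finset PowerSeries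

/-- Both sides are the coefficient of `X ^ k` in `(1 - X)⁻¹ ^ (a + 1) * (1 - X)⁻¹ ^ (b + 1)`. -/
theorem Nat.sum_antidiagonal_add_choose_mul_add_choose (a b k : ℕ) :
    ∑ ij ∈ antidiagonal k, (a + ij.1).choose a * (b + ij.2).choose b =
      (a + b + 1 + k).choose (a + b + 1) := by
  have h := congrArg (coeff k) (pow_add (mk 1 : ℤ⟦X⟧) (a + 1) (b + 1))
  rw [show a + 1 + (b + 1) = a + b + 1 + 1 by ring] at h
  simp only [mk_one_pow_eq_mk_choose_add, coeff_mul, coeff_mk] at h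
  exact_mod_cast h.symm

theorem g_vector_step_general (n d l g : ℕ) (hld : 2 * (l + 1) ≤ d)
    (hn : d + 2 ≤ n)
    (heq : (∑ i ∈ Finset.range (l + 1),
        (n - d - 2 + i).choose i * (d + 1 - i).choose (d - l)) + g = n.choose (l + 1)) :
    g = (n - d - 1 + l).choose (l + 1) := by
  have hconv := Nat.sum_antidiagonal_add_choose_mul_add_choose (n - d - 2) (d - l) (l + 1)
  rw [Nat.sum_antidiagonal_eq_sum_range_succ
    (fun i j => (n - d - 2 + i).choose (n - d - 2) * (d - l + j).choose (d - l)),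
    sum_range_succ] at hconv
  have hterms : ∀ i ∈ range (l + 1),
      (n - d - 2 + i).choose (n - d - 2) * (d - l + (l + 1 - i)).choose (d - l) =
        (n - d - 2 + i).choose i * (d + 1 - i).choose (d - l) := by
    intro i hi
    rw [Nat.choose_symm_add, show d - l + (l + 1 - i) = d + 1 - i by grind]
  have hlast : (n - d - 2 + (l + 1)).choose (n - d - 2) *
      (d - l + (l + 1 - (l + 1))).choose (d - l) = (n - d - 1 + l).choose (l + 1) := by
    rw [Nat.choose_symm_add, Nat.sub_self, add_zero, Nat.choose_self, mul_one,
      show n - d - 2 + (l + 1) = n - d - 1 + l by omega]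
  have htotal : (n - d - 2 + (d - l) + 1 + (l + 1)).choose (n - d - 2 + (d - l) + 1) =
      n.choose (l + 1) := by
    rw [show n - d - 2 + (d - l) + 1 + (l + 1) = n by omega,
      show n - d - 2 + (d - l) + 1 = n - (l + 1) by omega, Nat.choose_symm (by omega)]
  rw [sum_congr rfl hterms, hlast, htotal] at hconv
  omega

/-- Induction step for g-vector entries: if
Σ_{i=0}^{l} C(n−d−2+i, i)·C(d+1−i, d−l) + g = C(n, l+1),
then g = C(n−d−1+l, l+1). -/
theorem g_vector_step (n d l g : ℕ) (hl : 1 ≤ l) (hld : 2 * (l + 1) ≤ d)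
    (hn : d + 2 ≤ n)
    (heq : (∑ i ∈ Finset.range (l + 1),
        (n - d - 2 + i).choose i * (d + 1 - i).choose (d - l)) + g = n.choose (l + 1)) :
    g = (n - d - 1 + l).choose (l + 1) :=
  g_vector_step_general n d l g hld hn heq
end

section
/- For a simplicial k-neighborly d-polytope with n ≥ d+2 vertices, the lower bound Σ_{i=0}^{k} (d+1−2i) · C(n−d−2+i, i) on the number of facets is at least d + k² + 1. -/
/-! Every binomial coefficient in the sum is at least `1`, so the sum dominates the arithmetic
progression `∑ (d + 1 - 2i) = (k + 1)(d + 1 - k)`, which equals `d + k² + 1 + k(d - 2k)`. -/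

open Finset

lemma sum_range_succ_sub_two_mul (d k : ℕ) (hk : 2 * k ≤ d + 1) :
    ∑ i ∈ range (k + 1), (d + 1 - 2 * i) = (k + 1) * (d + 1 - k) := by
  induction k with
  | zero => simp
  | succ m ih =>
    rw [sum_range_succ, ih (by omega)]
    zify [show m ≤ d + 1 by omega, show 2 * (m + 1) ≤ d + 1 by omega,
      show m + 1 ≤ d + 1 by omega]
    ring

theorem facet_lower_bound_general (d k n : ℕ) (hd : 2 * k ≤ d) :
    d + k ^ 2 + 1 ≤ ∑ i ∈ Finset.range (k + 1), (d + 1 - 2 * i) * (n - d - 2 + i).choose i := by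
  calc d + k ^ 2 + 1 ≤ (k + 1) * (d + 1 - k) := by
        zify [show k ≤ d + 1 by omega]
        nlinarith
    _ = ∑ i ∈ range (k + 1), (d + 1 - 2 * i) := (sum_range_succ_sub_two_mul d k (by omega)).symm
    _ ≤ ∑ i ∈ range (k + 1), (d + 1 - 2 * i) * (n - d - 2 + i).choose i :=
        sum_le_sum fun i _ => Nat.le_mul_of_pos_right _ (Nat.choose_pos (Nat.le_add_left i _))

/-- Σ_{i=0}^{k} (d+1−2i)·C(n−d−2+i, i) ≥ d + k² + 1
for d ≥ 2k, k ≥ 1, n ≥ d+2. -/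
theorem facet_lower_bound (d k n : ℕ) (hk : 1 ≤ k) (hd : 2 * k ≤ d) (hn : d + 2 ≤ n) :
    d + k ^ 2 + 1 ≤ ∑ i ∈ Finset.range (k + 1), (d + 1 - 2 * i) * (n - d - 2 + i).choose i :=
  facet_lower_bound_general d k n hd
end

section
/- Let p ≥ 5 and let m_1,...,m_7 be nonnegative integers with m_1 ≥ 1, m_2 ≥ 1, m_5 ≥ 1, m_7 + 1 ≥ p, m_1 + m_2 ≥ p, m_2 + m_3 + m_4 ≥ p, m_3 + m_4 + m_5 ≥ p, m_4 + m_5 + 1 ≥ p. Then f := m_2 + m_3·m_7 + m_2·m_5·m_7 + m_4·m_7·(m_1 + m_2) + m_1·(m_3 + m_4 + m_5) ≥ 2p². -/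
set_option maxHeartbeats 800000 in
/-- Lemma 5: the open semicircle with exactly two positive labels, one of value 1. -/
theorem lemma5_bound (m1 m2 m3 m4 m5 m7 p : ℕ) (hp : 5 ≤ p)
    (hm1 : 1 ≤ m1) (hm2 : 1 ≤ m2) (hm5 : 1 ≤ m5)
    (h7 : p ≤ m7 + 1) (h12 : p ≤ m1 + m2) (h234 : p ≤ m2 + m3 + m4)
    (h345 : p ≤ m3 + m4 + m5) (h45 : p ≤ m4 + m5 + 1) :
    2 * p ^ 2 ≤ m2 + m3 * m7 + m2 * m5 * m7 + m4 * m7 * (m1 + m2) + m1 * (m3 + m4 + m5) := by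
  rcases le_or_gt 2 m4 with h4 | h4
  · -- case m4 ≥ 2
    zify at *
    have hb : (0:ℤ) ≤ m7 + 1 - p := by linarith
    have hc : (0:ℤ) ≤ m1 + m2 - p := by linarith
    have hd : (0:ℤ) ≤ m3 + m4 + m5 - p := by linarith
    have he : (0:ℤ) ≤ m2 - 1 := by linarith
    have hg : (0:ℤ) ≤ m5 - 1 := by linarith
    have hh : (0:ℤ) ≤ m1 - 1 := by linarith
    have hm3 : (0:ℤ) ≤ m3 := by positivity
    have ha : (0:ℤ) ≤ m4 - 2 := by linarith
    nlinarith [mul_nonneg (mul_nonneg ha hb) hc, mul_nonneg ha hb, mul_nonneg ha hc,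
      mul_nonneg hb hc, mul_nonneg (mul_nonneg he hg) hb, mul_nonneg he hg,
      mul_nonneg he hb, mul_nonneg hg hb, mul_nonneg hh hd, mul_nonneg hm3 hb, sq_nonneg ((p:ℤ)-1)]
  · interval_cases m4
    · -- m4 = 0
      rcases le_or_gt m2 p with hc2 | hc2
      · zify at *
        have hb : (0:ℤ) ≤ m7 + 1 - p := by linarith
        have hp1 : (0:ℤ) ≤ p - 1 := by linarith
        nlinarith [mul_nonneg (by linarith : (0:ℤ) ≤ m2 + m3 - p) hp1,
          mul_nonneg (by linarith : (0:ℤ) ≤ m1 + m2 - p) (by positivity : (0:ℤ) ≤ (p:ℤ)),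
          mul_nonneg (by linarith : (0:ℤ) ≤ (m2:ℤ) - 1) (mul_nonneg hp1 (by linarith : (0:ℤ) ≤ p - 3)),
          mul_nonneg (by linarith : (0:ℤ) ≤ p - 5) (by positivity : (0:ℤ) ≤ (p:ℤ)),
          mul_nonneg (by positivity : (0:ℤ) ≤ (m3:ℤ)) hb,
          mul_nonneg (mul_nonneg (by positivity : (0:ℤ) ≤ (m2:ℤ)) (by positivity : (0:ℤ) ≤ (m5:ℤ))) hb,
          mul_nonneg (mul_nonneg (by positivity : (0:ℤ) ≤ (m2:ℤ)) hp1) (by linarith : (0:ℤ) ≤ m5 - (p-1)),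
          mul_nonneg (by positivity : (0:ℤ) ≤ (m1:ℤ)) (by linarith : (0:ℤ) ≤ m3 + m5 - p)]
      · zify at *
        have hb : (0:ℤ) ≤ m7 + 1 - p := by linarith
        have hi0 : (0:ℤ) ≤ m5 - (p-1) := by linarith
        have ha2 : (0:ℤ) ≤ m2 - p - 1 := by linarith
        have hp1 : (0:ℤ) ≤ (p:ℤ) - 1 := by linarith
        nlinarith [mul_nonneg (mul_nonneg ha2 hi0) hb, mul_nonneg (mul_nonneg ha2 hi0) hp1,
          mul_nonneg (mul_nonneg ha2 hb) hp1, mul_nonneg (mul_nonneg hi0 hb) hp1,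
          mul_nonneg ha2 (mul_nonneg hp1 hp1), mul_nonneg hi0 (mul_nonneg hp1 hp1),
          mul_nonneg hb (mul_nonneg hp1 hp1),
          mul_nonneg (by positivity : (0:ℤ) ≤ (m1:ℤ)) (by linarith : (0:ℤ) ≤ m3 + m5 - p),
          mul_nonneg (by positivity : (0:ℤ) ≤ (p:ℤ)*p) (by linarith : (0:ℤ) ≤ p - 3),
          mul_nonneg (by linarith : (0:ℤ) ≤ (m1:ℤ) - 1) (by positivity : (0:ℤ) ≤ (p:ℤ)),
          mul_nonneg (by positivity : (0:ℤ) ≤ (m3:ℤ)) (by linarith : (0:ℤ) ≤ (m7:ℤ))]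
    · -- m4 = 1
      rcases le_or_gt m2 p with hc2 | hc2
      · zify at *
        have hb : (0:ℤ) ≤ m7 + 1 - p := by linarith
        have hp1 : (0:ℤ) ≤ p - 1 := by linarith
        nlinarith [mul_nonneg (by linarith : (0:ℤ) ≤ m2 + m3 - (p-1)) hp1,
          mul_nonneg (by linarith : (0:ℤ) ≤ m1 + m2 - p) (by linarith : (0:ℤ) ≤ 2*(p:ℤ) - 1),
          mul_nonneg (by linarith : (0:ℤ) ≤ (m2:ℤ) - 1) (mul_nonneg hp1 (by linarith : (0:ℤ) ≤ p - 4)),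
          mul_nonneg (by positivity : (0:ℤ) ≤ (m3:ℤ)) hb,
          mul_nonneg (mul_nonneg (by positivity : (0:ℤ) ≤ (m2:ℤ)) (by positivity : (0:ℤ) ≤ (m5:ℤ))) hb,
          mul_nonneg (mul_nonneg (by positivity : (0:ℤ) ≤ (m2:ℤ)) hp1) (by linarith : (0:ℤ) ≤ m5 - (p-2)),
          mul_nonneg (mul_nonneg (by linarith : (0:ℤ) ≤ (m1:ℤ) + m2) hb) (by norm_num : (0:ℤ) ≤ 1),
          mul_nonneg (by positivity : (0:ℤ) ≤ (m1:ℤ)) (by linarith : (0:ℤ) ≤ m3 + 1 + m5 - p)]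
      · zify at *
        have hb : (0:ℤ) ≤ m7 + 1 - p := by linarith
        have hi0 : (0:ℤ) ≤ m5 - (p-2) := by linarith
        have ha2 : (0:ℤ) ≤ m2 - p - 1 := by linarith
        nlinarith [mul_nonneg (mul_nonneg ha2 hi0) hb, mul_nonneg ha2 hi0, mul_nonneg ha2 hb,
          mul_nonneg hi0 hb,
          mul_nonneg (by positivity : (0:ℤ) ≤ (m1:ℤ)) (by linarith : (0:ℤ) ≤ m3 + 1 + m5 - p),
          mul_nonneg (by linarith : (0:ℤ) ≤ (m1:ℤ) + m2 - p) hb,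
          mul_nonneg (by positivity : (0:ℤ) ≤ (p:ℤ)) (by linarith : (0:ℤ) ≤ p - 4),
          mul_nonneg (by positivity : (0:ℤ) ≤ (p:ℤ)*p) (by linarith : (0:ℤ) ≤ p - 3),
          mul_nonneg (by positivity : (0:ℤ) ≤ (m3:ℤ)) (by linarith : (0:ℤ) ≤ (m7:ℤ))]
end

section
/- Let n ≥ 2 and let x_2,...,x_n and y_2,...,y_n be nonnegative integers with Σ x_i ≥ t+2 and Σ y_i ≥ t+2 for some integer t ≥ 5, and suppose min{x_i, y_i} ≤ 2 for every i ∈ [2, n]. Then for any nonnegative integers x_1, y_1, (Σ_{i=2}^n x_i)(Σ_{i=2}^n y_i) − Σ_{i=2}^n x_i y_i + x_1 + y_1 + 1 ≥ 4(t+1) + 2. -/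
/-!
Write `S = X * Y - ∑ xᵢ yᵢ = ∑ᵢ xᵢ (Y - yᵢ)`, split the indices according to whether `yᵢ ≤ 2`
and let `a = ∑_{yᵢ ≤ 2} xᵢ`, `b = ∑_{xᵢ ≤ 2} yᵢ`. An index with `yᵢ ≤ 2` contributes at least
`(Y - 2) xᵢ ≥ t xᵢ`; an index with `yᵢ > 2` has `xᵢ ≤ 2`, so `yᵢ ≤ b` and it contributes at least
`xᵢ (Y - b)`. Hence `S ≥ t a + (X - a)(Y - b)`, and symmetrically `S ≥ t b + (X - a)(Y - b)`.
If `max a b ≥ 5` this already gives `S ≥ 5t`; otherwise both factors of the product are at least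
`t + 2 - max a b`, and `t u + (t + 2 - u)² ≥ 4t + 5` for `0 ≤ u ≤ 4`, `t ≥ 5`.
-/

open Finset

theorem sum_mul_sum_sub_sum_mul_eq_sum {ι R : Type*} [CommRing R] (I : Finset ι) (f g : ι → R) :
    (∑ i ∈ I, f i) * (∑ i ∈ I, g i) - ∑ i ∈ I, f i * g i
      = ∑ i ∈ I, f i * (∑ j ∈ I, g j - g i) := by
  simp only [mul_sub, sum_sub_distrib, sum_mul]

theorem add_le_sum_mul_sum_sub_sum_mul_of_min_le {ι : Type*} (I : Finset ι) (x y : ι → ℕ) (k : ℕ)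
    (hmin : ∀ i ∈ I, min (x i) (y i) ≤ k) :
    ((∑ i ∈ I, (y i : ℤ)) - k) * (∑ i ∈ I with y i ≤ k, (x i : ℤ))
      + (∑ i ∈ I with ¬y i ≤ k, (x i : ℤ)) * (∑ i ∈ I with ¬x i ≤ k, (y i : ℤ))
      ≤ (∑ i ∈ I, (x i : ℤ)) * (∑ i ∈ I, (y i : ℤ)) - ∑ i ∈ I, (x i : ℤ) * y i := by
  rw [eq_sub_of_add_eq' (sum_filter_add_sum_filter_not I (fun i => x i ≤ k) (fun i => (y i : ℤ))),
    sum_mul_sum_sub_sum_mul_eq_sum, ← sum_filter_add_sum_filter_not I (fun i => y i ≤ k)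
    (fun i => (x i : ℤ) * (∑ j ∈ I, (y j : ℤ) - y i))]
  apply add_le_add
  · rw [mul_sum]
    refine sum_le_sum fun i hi => ?_
    have hyk : (y i : ℤ) ≤ k := by exact_mod_cast (mem_filter.1 hi).2
    nlinarith [(x i).cast_nonneg (α := ℤ)]
  · rw [sum_mul]
    refine sum_le_sum fun i hi => ?_
    obtain ⟨hiI, hyk⟩ := mem_filter.1 hi
    have hxk : x i ≤ k := by have := hmin i hiI; omega
    have hyb : (y i : ℤ) ≤ ∑ j ∈ I with x j ≤ k, (y j : ℤ) :=
      single_le_sum (fun j _ => (y j).cast_nonneg) (mem_filter.2 ⟨hiI, hxk⟩)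
    exact mul_le_mul_of_nonneg_left (by linarith) (x i).cast_nonneg

theorem four_mul_add_five_le_mul_add_mul {t u p q : ℤ} (ht : 5 ≤ t) (hu : 0 ≤ u) (hp : 0 ≤ p)
    (hq : 0 ≤ q) (hpu : t + 2 ≤ p + u) (hqu : t + 2 ≤ q + u) : 4 * t + 5 ≤ t * u + p * q := by
  rcases le_or_gt 5 u with hu5 | hu4
  · nlinarith [mul_nonneg hp hq]
  · have hpq : (t + 2 - u) * (t + 2 - u) ≤ p * q :=
      mul_le_mul (by linarith) (by linarith) (by linarith) hp
    nlinarith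

theorem four_mul_add_five_le_sum_mul_sum_sub_sum_mul {ι : Type*} (I : Finset ι) (x y : ι → ℕ)
    {t : ℤ} (ht : 5 ≤ t) (hX : t + 2 ≤ ∑ i ∈ I, (x i : ℤ)) (hY : t + 2 ≤ ∑ i ∈ I, (y i : ℤ))
    (hmin : ∀ i ∈ I, min (x i) (y i) ≤ 2) :
    4 * t + 5 ≤ (∑ i ∈ I, (x i : ℤ)) * (∑ i ∈ I, (y i : ℤ)) - ∑ i ∈ I, (x i : ℤ) * y i := by
  have hxy := add_le_sum_mul_sum_sub_sum_mul_of_min_le I x y 2 hmin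
  have hyx := add_le_sum_mul_sum_sub_sum_mul_of_min_le I y x 2
    fun i hi => min_comm (x i) (y i) ▸ hmin i hi
  simp only [mul_comm (y _ : ℤ), mul_comm (∑ i ∈ I, (y i : ℤ)), Nat.cast_ofNat] at hxy hyx
  have hXa := sum_filter_add_sum_filter_not I (fun i => y i ≤ 2) (fun i => (x i : ℤ))
  have hYb := sum_filter_add_sum_filter_not I (fun i => x i ≤ 2) (fun i => (y i : ℤ))
  set a := ∑ i ∈ I with y i ≤ 2, (x i : ℤ)
  set b := ∑ i ∈ I with x i ≤ 2, (y i : ℤ)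
  set p := ∑ i ∈ I with ¬y i ≤ 2, (x i : ℤ)
  set q := ∑ i ∈ I with ¬x i ≤ 2, (y i : ℤ)
  have ha : 0 ≤ a := sum_nonneg fun i _ => (x i).cast_nonneg
  have hb : 0 ≤ b := sum_nonneg fun i _ => (y i).cast_nonneg
  have hp : 0 ≤ p := sum_nonneg fun i _ => (x i).cast_nonneg
  have hq : 0 ≤ q := sum_nonneg fun i _ => (y i).cast_nonneg
  rcases le_total b a with hba | hab
  · have := four_mul_add_five_le_mul_add_mul ht ha hp hq (by linarith) (by linarith)
    nlinarith
  · have := four_mul_add_five_le_mul_add_mul ht hb hq hp (by linarith) (by linarith)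
    nlinarith

theorem lemma6_case1_general (n t : ℕ) (ht : 5 ≤ t) (x y : ℕ → ℕ)
    (hx : t + 2 ≤ ∑ i ∈ Finset.Icc 2 n, x i)
    (hy : t + 2 ≤ ∑ i ∈ Finset.Icc 2 n, y i)
    (hmin : ∀ i ∈ Finset.Icc 2 n, min (x i) (y i) ≤ 2)
    (x1 y1 : ℕ) :
    (4 * ((t : ℤ) + 1) + 2) ≤
      (∑ i ∈ Finset.Icc 2 n, (x i : ℤ)) * (∑ i ∈ Finset.Icc 2 n, (y i : ℤ))
        - (∑ i ∈ Finset.Icc 2 n, (x i : ℤ) * (y i : ℤ)) + x1 + y1 + 1 := by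
  have key := four_mul_add_five_le_sum_mul_sum_sub_sum_mul (Finset.Icc 2 n) x y
    (t := t) (by exact_mod_cast ht) (by exact_mod_cast hx) (by exact_mod_cast hy) hmin
  linarith [x1.cast_nonneg (α := ℤ), y1.cast_nonneg (α := ℤ)]

/-- First case of the induction step of Lemma 6. -/
theorem lemma6_case1 (n t : ℕ) (hn : 2 ≤ n) (ht : 5 ≤ t) (x y : ℕ → ℕ)
    (hx : t + 2 ≤ ∑ i ∈ Finset.Icc 2 n, x i)
    (hy : t + 2 ≤ ∑ i ∈ Finset.Icc 2 n, y i)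
    (hmin : ∀ i ∈ Finset.Icc 2 n, min (x i) (y i) ≤ 2)
    (x1 y1 : ℕ) :
    (4 * ((t : ℤ) + 1) + 2) ≤
      (∑ i ∈ Finset.Icc 2 n, (x i : ℤ)) * (∑ i ∈ Finset.Icc 2 n, (y i : ℤ))
        - (∑ i ∈ Finset.Icc 2 n, (x i : ℤ) * (y i : ℤ)) + x1 + y1 + 1 :=
  lemma6_case1_general n t ht x y hx hy hmin x1 y1
end

section
/- Suppose a degree-based chain of inequalities holds: for all j with 0 < j ≤ i, (d−j+1)·f_{j−1} ≤ (j+1)·f_j, where f_0,...,f_i are positive reals, d = 2m is even, and m ≤ i ≤ d−1. Then f_{d−i−1} ≤ f_i. -/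
/-- Abstract Lemma 1, even case d = 2m: if (d−j+1)·f_{j−1} ≤ (j+1)·f_j for
0 < j ≤ i, with f positive and m ≤ i ≤ d−1, then f_{d−i−1} ≤ f_i. -/
theorem telescoping_even (m i : ℕ) (f : ℕ → ℝ)
    (hpos : ∀ j ≤ i, 0 < f j)
    (hmi : m ≤ i) (hid : i + 1 ≤ 2 * m)
    (hchain : ∀ j, 0 < j → j ≤ i →
      ((2 * m : ℝ) - j + 1) * f (j - 1) ≤ ((j : ℝ) + 1) * f j) :
    f (2 * m - i - 1) ≤ f i := by
  have hm : 1 ≤ m := by omega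
  have key : ∀ k, m + k ≤ i → f (m - k - 1) ≤ f (m + k) := by
    intro k
    induction k with
    | zero =>
      intro hk
      have h := hchain m (by omega) (by omega)
      have hfp := hpos (m - 1) (by omega)
      simp only [Nat.add_zero, Nat.sub_zero]
      have c : (2 * (m:ℝ) - (m:ℝ) + 1) = (m:ℝ) + 1 := by ring
      rw [c] at h
      exact le_of_mul_le_mul_left h (by positivity)
    | succ k ih =>
      intro hk
      have hkm : k + 2 ≤ m := by omega
      have ih' := ih (by omega)
      have h1 := hchain (m - k - 1) (by omega) (by omega)
      have h2 := hchain (m + k + 1) (by omega) (by omega)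
      have e1 : ((m - k - 1 : ℕ) : ℝ) = (m : ℝ) - (k + 1) := by
        have e : (m - k - 1 : ℕ) = m - (k + 1) := by omega
        rw [e, Nat.cast_sub (by omega)]; push_cast; ring
      have e2 : m - k - 1 - 1 = m - (k + 1) - 1 := by omega
      have e4 : m - k - 1 = m - (k + 1) := by omega
      rw [e1, e2, e4] at h1
      rw [e4] at ih' 
      have c1 : (2 * (m:ℝ) - ((m:ℝ) - ((k:ℝ) + 1)) + 1) = (m:ℝ) + (k:ℝ) + 2 := by ring
      have c2 : ((m:ℝ) - ((k:ℝ) + 1) + 1) = (m:ℝ) - (k:ℝ) := by ring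
      rw [c1, c2] at h1
      push_cast at h2
      have c3 : (2 * (m:ℝ) - ((m:ℝ) + (k:ℝ) + 1) + 1) = (m:ℝ) - (k:ℝ) := by ring
      have c4 : ((m:ℝ) + (k:ℝ) + 1 + 1) = (m:ℝ) + (k:ℝ) + 2 := by ring
      rw [c3, c4] at h2
      have e3 : m + (k + 1) = m + k + 1 := by omega
      rw [e3]
      have p1 := hpos (m - (k + 1) - 1) (by omega)
      have p2 := hpos (m - (k + 1)) (by omega)
      have p3 := hpos (m + k) (by omega)
      have p4 := hpos (m + k + 1) (by omega)
      have hmk : (0:ℝ) < (m:ℝ) - k := by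
        have : (k:ℝ) + 2 ≤ (m:ℝ) := by exact_mod_cast hkm
        linarith
      -- h1 : (2m - (m - (k+1)) + 1) * f (m-(k+1)-1) ≤ ((m-(k+1)) + 1) * f (m-(k+1))
      -- i.e. (m+k+2) * f(m-(k+1)-1) ≤ (m-k) * f(m-(k+1))
      -- ih' : f(m-(k+1)) ≤ f(m+k)
      -- h2 : (m-k) * f(m+k) ≤ (m+k+2) * f(m+k+1)
      have step1 : ((m:ℝ) + k + 2) * f (m - (k + 1) - 1) ≤ ((m:ℝ) - k) * f (m - (k + 1)) := h1
      have step2 : ((m:ℝ) - k) * f (m - (k + 1)) ≤ ((m:ℝ) - k) * f (m + k) :=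
        mul_le_mul_of_nonneg_left ih' (le_of_lt hmk)
      have step3 : ((m:ℝ) - k) * f (m + k) ≤ ((m:ℝ) + k + 2) * f (m + k + 1) := h2
      exact le_of_mul_le_mul_left (by linarith) (by positivity : (0:ℝ) < (m:ℝ) + k + 2)
  have h := key (i - m) (by omega)
  have e5 : m - (i - m) - 1 = 2 * m - i - 1 := by omega
  have e6 : m + (i - m) = i := by omega
  rwa [e5, e6] at h
end

section
/- Suppose a degree-based chain of inequalities holds: for all j with 0 < j ≤ i, (d−j+1)·f_{j−1} ≤ (j+1)·f_j, where f_0,...,f_i are positive reals, d = 2m−1 is odd, and m ≤ i ≤ d−1. Then f_{d−i−1} ≤ f_i. -/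
/-- Abstract Lemma 1, odd case d = 2m−1: if (d−j+1)·f_{j−1} ≤ (j+1)·f_j for
0 < j ≤ i, with f positive and m ≤ i ≤ d−1, then f_{d−i−1} ≤ f_i. -/
theorem telescoping_odd (m i : ℕ) (f : ℕ → ℝ) (hm : 1 ≤ m)
    (hpos : ∀ j ≤ i, 0 < f j)
    (hmi : m ≤ i) (hid : i + 2 ≤ 2 * m)
    (hchain : ∀ j, 0 < j → j ≤ i →
      ((2 * m : ℝ) - 1 - j + 1) * f (j - 1) ≤ ((j : ℝ) + 1) * f j) :
    f (2 * m - 1 - i - 1) ≤ f i := by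
  have hm2 : 2 ≤ m := by omega
  revert hpos hid hchain
  induction i, hmi using Nat.le_induction with
  | base =>
    intro hpos hid hchain
    have e : 2 * m - 1 - m - 1 = m - 2 := by omega
    rw [e]
    have h1 := hchain (m - 1) (by omega) (by omega)
    have h2 := hchain m (by omega) le_rfl
    have e1 : m - 1 - 1 = m - 2 := by omega
    rw [e1] at h1
    have c1 : ((m - 1 : ℕ) : ℝ) = (m : ℝ) - 1 := by
      push_cast [Nat.cast_sub (by omega : 1 ≤ m)]; ring
    rw [c1] at h1
    have hp := hpos (m - 2) (by omega)
    have hpm := hpos m le_rfl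
    have hmr : (2 : ℝ) ≤ (m : ℝ) := by exact_mod_cast hm2
    nlinarith [h1, h2, hp, hpm]
  | succ i hi ih =>
    intro hpos hid hchain
    have ih' := ih (fun j hj => hpos j (by omega)) (by omega)
      (fun j hj hji => hchain j hj (by omega))
    have e : 2 * m - 1 - (i + 1) - 1 = (2 * m - 2 - i) - 1 := by omega
    rw [e]
    have e2 : 2 * m - 1 - i - 1 = 2 * m - 2 - i := by omega
    rw [e2] at ih'
    have h1 := hchain (2 * m - 2 - i) (by omega) (by omega)
    have h2 := hchain (i + 1) (by omega) (by omega)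
    have c1 : ((2 * m - 2 - i : ℕ) : ℝ) = 2 * (m : ℝ) - 2 - (i : ℝ) := by
      have : (2 * m - 2 - i : ℕ) + i + 2 = 2 * m := by omega
      have := congrArg (fun n : ℕ => (n : ℝ)) this
      push_cast at this
      linarith
    rw [c1] at h1
    push_cast at h2
    have hp1 := hpos ((2 * m - 2 - i) - 1) (by omega)
    have hp2 := hpos (2 * m - 2 - i) (by omega)
    have hpi := hpos i (by omega)
    have hpi1 := hpos (i + 1) le_rfl
    have hir : (m : ℝ) ≤ (i : ℝ) := by exact_mod_cast hi
    have hidr : (i : ℝ) + 3 ≤ 2 * (m : ℝ) := by exact_mod_cast hid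
    nlinarith [h1, h2, ih', hp1, hp2, hpi, hpi1, mul_le_mul_of_nonneg_left ih' (by linarith : (0:ℝ) ≤ 2 * (m:ℝ) - 1 - (i:ℝ))]
end
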